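/- arXiv:2602.07961 — 4 statements merged into one kernel-verified Lean document; each statement's English description precedes it below -/
import Mathlib

section
/- Let τ ∈ (0,1) be fixed. For the gradient iteration x_{k+1} = (1−τ)x_k − τ·sign(x_k)|x_k|^{1/2} applied to f(x) = x²/2 + (2/3)|x|^{3/2}, if |x_k| > 0 is sufficiently small (specifically if |x_k|^{1/2} ≤ τ/(2 + 2(1−τ))), then |x_{k+1}|² ≥ |x_k|²; that is, the distance to the minimizer 0 ceases to decrease. -/
/-!
Write `r = √|x|`. Since `x = sign x * r ^ 2`, one step of the iteration gives
`x' = sign x * ((1 - τ) r ^ 2 - τ r)`, and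
`|x'| ^ 2 - |x| ^ 2 = τ r ^ 2 (1 + r) (τ - (2 - τ) r)`.
The last factor is nonnegative as soon as `r` is small compared with `τ`, so the step does not
bring the iterate closer to the minimizer `0`.
-/

lemma Real.sign_mul_abs (x : ℝ) : Real.sign x * |x| = x := by
  rcases lt_trichotomy x 0 with hx | rfl | hx
  · rw [Real.sign_of_neg hx, abs_of_neg hx, neg_one_mul, neg_neg]
  · rw [abs_zero, mul_zero]
  · rw [Real.sign_of_pos hx, abs_of_pos hx, one_mul]

lemma Real.abs_sign_of_ne_zero {x : ℝ} (hx : x ≠ 0) : |Real.sign x| = 1 := by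
  rcases Real.sign_apply_eq_of_ne_zero x hx with h | h <;> simp [h]

lemma abs_sub_sign_mul_eq (τ s : ℝ) {x : ℝ} (hx : x ≠ 0) :
    |(1 - τ) * x - τ * Real.sign x * s| = |(1 - τ) * |x| - τ * s| := by
  have hfactor : (1 - τ) * x - τ * Real.sign x * s = Real.sign x * ((1 - τ) * |x| - τ * s) := by
    linear_combination (τ - 1) * Real.sign_mul_abs x
  rw [hfactor, abs_mul, Real.abs_sign_of_ne_zero hx, one_mul]

lemma sq_sq_le_sq_sub_of_two_sub_mul_le {τ r : ℝ} (hτ : 0 ≤ τ) (hr : 0 ≤ r) (h : (2 - τ) * r ≤ τ) :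
    (r ^ 2) ^ 2 ≤ ((1 - τ) * r ^ 2 - τ * r) ^ 2 := by
  have hdiff : ((1 - τ) * r ^ 2 - τ * r) ^ 2 - (r ^ 2) ^ 2
      = τ * r ^ 2 * (1 + r) * (τ - (2 - τ) * r) := by ring
  have hnonneg : 0 ≤ τ * r ^ 2 * (1 + r) * (τ - (2 - τ) * r) := by
    have := sub_nonneg.2 h
    positivity
  linarith

lemma two_sub_mul_le_of_le_div {τ r : ℝ} (hτ : τ < 2) (hr : 0 ≤ r) (h : r ≤ τ / (2 + 2 * (1 - τ))) :
    (2 - τ) * r ≤ τ := by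
  rw [le_div_iff₀ (by linarith)] at h
  nlinarith

theorem stmt_4 (τ : ℝ) (hτ : τ ∈ Set.Ioo (0:ℝ) 1) (xk : ℝ) (hx : 0 < |xk|)
    (hsmall : |xk| ^ ((1:ℝ)/2) ≤ τ / (2 + 2 * (1 - τ))) :
    |(1 - τ) * xk - τ * Real.sign xk * |xk| ^ ((1:ℝ)/2)| ^ 2 ≥ |xk| ^ 2 := by
  rw [← Real.sqrt_eq_rpow] at hsmall ⊢
  set r := √|xk|
  have hr : r ^ 2 = |xk| := Real.sq_sqrt (abs_nonneg xk)
  rw [abs_sub_sign_mul_eq τ r (abs_pos.mp hx), sq_abs, ← hr]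
  exact sq_sq_le_sq_sub_of_two_sub_mul_le hτ.1.le (Real.sqrt_nonneg _)
    (two_sub_mul_le_of_le_div (by linarith [hτ.2]) (Real.sqrt_nonneg _) hsmall)
end

section
/- Let α ∈ (0,1), L > 0, δ > 0, and let ρ ≥ ((1−α)/((1+α)δ))^{(1−α)/(1+α)} · L^{2/(1+α)}. Then for every t ≥ 0, (L/(1+α))·t^{1+α} ≤ (ρ/2)·t² + δ/2. -/
/-!
Weighted AM–GM with weights `(1 + α) / 2` and `(1 - α) / 2`, applied to `ρ / (1 + α) * t ^ 2` and
`δ / (1 - α)`, bounds `ρ / 2 * t ^ 2 + δ / 2` from below by a multiple of `t ^ (1 + α)`. The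
threshold on `ρ` is exactly the value at which that multiple equals `L / (1 + α)`.
-/

open Real

theorem rpow_mul_rpow_mul_rpow_two_mul_le {w₁ w₂ a b t : ℝ} (hw₁ : 0 ≤ w₁) (hw₂ : 0 ≤ w₂)
    (hw : w₁ + w₂ = 1) (ha : 0 ≤ a) (hb : 0 ≤ b) (ht : 0 ≤ t) :
    a ^ w₁ * b ^ w₂ * t ^ (2 * w₁) ≤ w₁ * a * t ^ 2 + w₂ * b := by
  have amgm := geom_mean_le_arith_mean2_weighted hw₁ hw₂ (by positivity : 0 ≤ a * t ^ 2) hb hw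
  rwa [mul_rpow ha (by positivity), ← rpow_natCast_mul ht, Nat.cast_ofNat, mul_right_comm,
    ← mul_assoc] at amgm

noncomputable def quadraticMajorantCoeff (α L δ : ℝ) : ℝ :=
  ((1 - α) / ((1 + α) * δ)) ^ ((1 - α) / (1 + α)) * L ^ (2 / (1 + α))

theorem quadraticMajorantCoeff_nonneg {α L δ : ℝ} (hα₀ : -1 < α) (hα₁ : α < 1) (hL : 0 ≤ L)
    (hδ : 0 < δ) : 0 ≤ quadraticMajorantCoeff α L δ := by
  have hp : 0 < 1 + α := by linarith
  have hm : 0 < 1 - α := by linarith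
  unfold quadraticMajorantCoeff
  positivity

theorem quadraticMajorantCoeff_div_rpow_mul_rpow {α L δ : ℝ} (hα₀ : -1 < α) (hα₁ : α < 1)
    (hL : 0 ≤ L) (hδ : 0 < δ) :
    (quadraticMajorantCoeff α L δ / (1 + α)) ^ ((1 + α) / 2) * (δ / (1 - α)) ^ ((1 - α) / 2) =
      L / (1 + α) := by
  have hp : 0 < 1 + α := by linarith
  have hm : 0 < 1 - α := by linarith
  have hratio : (1 - α) / ((1 + α) * δ) * (δ / (1 - α)) = (1 + α)⁻¹ := by
    field_simp
  have hsplit : (1 + α) ^ ((1 - α) / 2) * (1 + α) ^ ((1 + α) / 2) = 1 + α := by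
    rw [← rpow_add hp]; ring_nf; exact rpow_one _
  rw [quadraticMajorantCoeff, div_rpow (by positivity) hp.le,
    mul_rpow (by positivity) (by positivity), ← rpow_mul (by positivity), ← rpow_mul hL,
    show (1 - α) / (1 + α) * ((1 + α) / 2) = (1 - α) / 2 by field_simp,
    show 2 / (1 + α) * ((1 + α) / 2) = 1 by field_simp, rpow_one]
  calc _ = ((1 - α) / ((1 + α) * δ) * (δ / (1 - α))) ^ ((1 - α) / 2) * L
        / (1 + α) ^ ((1 + α) / 2) := by
        rw [mul_rpow (by positivity) (by positivity)]; ring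
    _ = L / ((1 + α) ^ ((1 - α) / 2) * (1 + α) ^ ((1 + α) / 2)) := by
        rw [hratio, inv_rpow hp.le]; field_simp
    _ = L / (1 + α) := by rw [hsplit]

theorem stmt_6 (α L δ ρ : ℝ) (hα : α ∈ Set.Ioo (0:ℝ) 1) (hL : 0 < L) (hδ : 0 < δ)
    (hρ : ρ ≥ ((1 - α) / ((1 + α) * δ)) ^ ((1 - α) / (1 + α)) * L ^ (2 / (1 + α))) :
    ∀ t : ℝ, 0 ≤ t → L / (1 + α) * t ^ (1 + α) ≤ ρ / 2 * t ^ 2 + δ / 2 := by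
  intro t ht
  obtain ⟨hα₀, hα₁⟩ := hα
  have hα₀' : -1 < α := by linarith
  have hp : 0 < 1 + α := by linarith
  have hm : 0 < 1 - α := by linarith
  have hK := quadraticMajorantCoeff_nonneg hα₀' hα₁ hL.le hδ
  change quadraticMajorantCoeff α L δ ≤ ρ at hρ
  calc L / (1 + α) * t ^ (1 + α)
      = (quadraticMajorantCoeff α L δ / (1 + α)) ^ ((1 + α) / 2) * (δ / (1 - α)) ^ ((1 - α) / 2)
          * t ^ (2 * ((1 + α) / 2)) := by
        rw [quadraticMajorantCoeff_div_rpow_mul_rpow hα₀' hα₁ hL.le hδ,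
          mul_div_cancel₀ _ two_ne_zero]
    _ ≤ (ρ / (1 + α)) ^ ((1 + α) / 2) * (δ / (1 - α)) ^ ((1 - α) / 2)
          * t ^ (2 * ((1 + α) / 2)) := by
        gcongr
    _ ≤ (1 + α) / 2 * (ρ / (1 + α)) * t ^ 2 + (1 - α) / 2 * (δ / (1 - α)) :=
        rpow_mul_rpow_mul_rpow_two_mul_le (by positivity) (by positivity) (by ring)
          (div_nonneg (hK.trans hρ) hp.le) (by positivity) ht
    _ = ρ / 2 * t ^ 2 + δ / 2 := by field_simp
end

section
/- Let Ω ⊆ ℝⁿ be convex, and for each i ∈ {1,…,m} let fᵢ : ℝⁿ → ℝ be continuously differentiable with ‖∇fᵢ(u) − ∇fᵢ(v)‖ ≤ Lᵢ‖u − v‖^{αᵢ} on Ω, where αᵢ ∈ (0,1] and Lᵢ > 0. Set f = (1/m)∑ᵢ fᵢ. Let δ > 0 and ρ ≥ max_i { ((1−αᵢ)/((1+αᵢ)δ))^{(1−αᵢ)/(1+αᵢ)} · Lᵢ^{2/(1+αᵢ)} } (with the convention 0⁰ = 1). Then for all u, v ∈ Ω, f(v) ≤ f(u) + ⟨∇f(u),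 v − u⟩ + (ρ/2)‖v − u‖² + δ/2. -/
/-!
Along the segment from `u` to `v`, the Hölder bound on `∇fᵢ` gives
`fᵢ v ≤ fᵢ u + ⟪∇fᵢ u, v - u⟫ + Lᵢ / (1 + αᵢ) * ‖v - u‖ ^ (1 + αᵢ)`.
Weighted AM–GM with weights `(1 + α) / 2` and `(1 - α) / 2` trades the power `r ^ (1 + α)` for
`ρ / 2 * r ^ 2 + δ / 2`, and the threshold on `ρ` is exactly what makes the constants match.
Averaging over `i` gives the claim.
-/

open Set RealInnerProductSpace

/-- At `α = 1` this is `L`, since `0 ^ 0 = 1` for `Real.rpow`, as in the paper. -/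
noncomputable def inexactLipschitzConstant (α L δ : ℝ) : ℝ :=
  ((1 - α) / ((1 + α) * δ)) ^ ((1 - α) / (1 + α)) * L ^ (2 / (1 + α))

lemma mul_rpow_le_rpow_of_inexactLipschitzConstant_le {α L δ ρ : ℝ} (hα₀ : -1 < α)
    (hα₁ : α ≤ 1) (hL : 0 ≤ L) (hδ : 0 ≤ δ) (hρ : inexactLipschitzConstant α L δ ≤ ρ) :
    L * ((1 - α) / ((1 + α) * δ)) ^ ((1 - α) / 2) ≤ ρ ^ ((1 + α) / 2) := by
  have hB : 0 ≤ (1 - α) / ((1 + α) * δ) := div_nonneg (by linarith) (by nlinarith)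
  have hα : 1 + α ≠ 0 := by linarith
  calc L * ((1 - α) / ((1 + α) * δ)) ^ ((1 - α) / 2)
      = inexactLipschitzConstant α L δ ^ ((1 + α) / 2) := by
        rw [inexactLipschitzConstant, Real.mul_rpow (by positivity) (by positivity),
          ← Real.rpow_mul hB, ← Real.rpow_mul hL, mul_comm]
        congr 2 <;> field_simp
        simp
    _ ≤ ρ ^ ((1 + α) / 2) :=
        Real.rpow_le_rpow (by unfold inexactLipschitzConstant; positivity) hρ (by linarith)

lemma div_mul_rpow_le_of_inexactLipschitzConstant_le {α L δ ρ t : ℝ} (hα₀ : -1 < α)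
    (hα₁ : α ≤ 1) (hL : 0 ≤ L) (hδ : 0 < δ) (hρ : inexactLipschitzConstant α L δ ≤ ρ)
    (ht : 0 ≤ t) : L / (1 + α) * t ^ (1 + α) ≤ ρ / 2 * t ^ 2 + δ / 2 := by
  rcases hα₁.eq_or_lt with rfl | hα₁
  · norm_num [inexactLipschitzConstant] at hρ ⊢
    nlinarith [sq_nonneg t]
  have hα : 0 < 1 + α := by linarith
  have hρ₀ : 0 ≤ ρ := le_trans (by unfold inexactLipschitzConstant; positivity) hρ
  set θ := (1 + α) / 2 with hθ
  set B := (1 - α) / ((1 + α) * δ) with hB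
  have key := mul_rpow_le_rpow_of_inexactLipschitzConstant_le hα₀ hα₁.le hL hδ.le hρ
  rw [← hB, ← hθ, show (1 - α) / 2 = 1 - θ by ring] at key
  have hp₂ : 0 ≤ δ / (1 - α) := div_nonneg hδ.le (by linarith)
  calc L / (1 + α) * t ^ (1 + α)
      = L * B ^ (1 - θ) * (t ^ (1 + α) * (δ / (1 - α)) ^ (1 - θ) / (1 + α) ^ θ) := by
        have hBδ : B * (δ / (1 - α)) = (1 + α)⁻¹ := by
          rw [hB]; field_simp
        have hsplit : (1 + α) ^ (1 - θ) * (1 + α) ^ θ = 1 + α := by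
          rw [← Real.rpow_add hα, sub_add_cancel, Real.rpow_one]
        rw [show ∀ x y z : ℝ, L * x * (t ^ (1 + α) * y / z) = L * (x * y) * t ^ (1 + α) / z by
            intros; ring, ← Real.mul_rpow (by positivity) hp₂, hBδ, Real.inv_rpow hα.le]
        nth_rw 1 [← hsplit]
        field_simp
    _ ≤ ρ ^ θ * (t ^ (1 + α) * (δ / (1 - α)) ^ (1 - θ) / (1 + α) ^ θ) := by gcongr
    _ = (ρ / (1 + α) * t ^ 2) ^ θ * (δ / (1 - α)) ^ (1 - θ) := by
        rw [Real.mul_rpow (by positivity) (by positivity), Real.div_rpow hρ₀ hα.le,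
          ← Real.rpow_natCast, ← Real.rpow_mul ht]
        norm_num [hθ]
        ring_nf
    _ ≤ θ * (ρ / (1 + α) * t ^ 2) + (1 - θ) * (δ / (1 - α)) :=
        Real.geom_mean_le_arith_mean2_weighted (by positivity) (by linarith) (by positivity)
          hp₂ (by ring)
    _ = ρ / 2 * t ^ 2 + δ / 2 := by
        rw [hθ]; field_simp; ring

lemma le_add_add_div_of_deriv_sub_le_mul_rpow {φ φ' : ℝ → ℝ} {K α : ℝ} (hα : 0 ≤ α)
    (hφ : ∀ t ∈ Icc (0 : ℝ) 1, HasDerivAt φ (φ' t) t)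
    (hφ' : ∀ t ∈ Ioo (0 : ℝ) 1, φ' t - φ' 0 ≤ K * t ^ α) :
    φ 1 ≤ φ 0 + φ' 0 + K / (1 + α) := by
  set h : ℝ → ℝ := fun t ↦ φ t - t * φ' 0 - K / (1 + α) * t ^ (1 + α)
  have hh : ∀ t ∈ Icc (0 : ℝ) 1, HasDerivAt h (φ' t - φ' 0 - K * t ^ α) t := by
    intro t ht
    have hpow := Real.hasDerivAt_rpow_const (x := t) (p := 1 + α) (Or.inr (by linarith))
    refine (((hφ t ht).sub ((hasDerivAt_id t).mul_const (φ' 0))).sub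
      (hpow.const_mul (K / (1 + α)))).congr_deriv ?_
    rw [add_sub_cancel_left, one_mul]
    field_simp
  have hanti : AntitoneOn h (Icc 0 1) := by
    refine antitoneOn_of_deriv_nonpos (convex_Icc 0 1)
      (fun t ht ↦ (hh t ht).continuousAt.continuousWithinAt) ?_ ?_
    · rw [interior_Icc]
      exact fun t ht ↦ (hh t (Ioo_subset_Icc_self ht)).differentiableAt.differentiableWithinAt
    · rw [interior_Icc]
      intro t ht
      rw [(hh t (Ioo_subset_Icc_self ht)).deriv]
      linarith [hφ' t ht]
  have h10 := hanti (left_mem_Icc.2 zero_le_one) (right_mem_Icc.2 zero_le_one) zero_le_one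
  simp only [h, Real.one_rpow, Real.zero_rpow (by linarith : 1 + α ≠ 0)] at h10
  linarith

lemma le_add_apply_add_mul_rpow_of_holder {E : Type*} [NormedAddCommGroup E] [NormedSpace ℝ E]
    {Ω : Set E} (hΩ : Convex ℝ Ω) {f : E → ℝ} {f' : E → E →L[ℝ] ℝ} {α L : ℝ} (hα : 0 ≤ α)
    (hf : ∀ x ∈ Ω, HasFDerivAt f (f' x) x)
    (hf' : ∀ x ∈ Ω, ∀ y ∈ Ω, ‖f' x - f' y‖ ≤ L * ‖x - y‖ ^ α)
    {u v : E} (hu : u ∈ Ω) (hv : v ∈ Ω) :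
    f v ≤ f u + f' u (v - u) + L / (1 + α) * ‖v - u‖ ^ (1 + α) := by
  set γ : ℝ → E := fun t ↦ u + t • (v - u)
  have hγ : ∀ t ∈ Icc (0 : ℝ) 1, γ t ∈ Ω := fun t ht ↦ hΩ.add_smul_sub_mem hu hv ht
  have hφ : ∀ t ∈ Icc (0 : ℝ) 1, HasDerivAt (f ∘ γ) (f' (γ t) (v - u)) t := by
    intro t ht
    have hγ' := ((hasDerivAt_id t).smul_const (v - u)).const_add u
    rw [one_smul] at hγ'
    exact (hf _ (hγ t ht)).comp_hasDerivAt t hγ'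
  have hφ' : ∀ t ∈ Ioo (0 : ℝ) 1,
      f' (γ t) (v - u) - f' (γ 0) (v - u) ≤ L * ‖v - u‖ ^ (1 + α) * t ^ α := by
    intro t ht
    have hγt : ‖γ t - u‖ = t * ‖v - u‖ := by
      simp [γ, norm_smul, abs_of_pos ht.1]
    calc f' (γ t) (v - u) - f' (γ 0) (v - u) = (f' (γ t) - f' u) (v - u) := by simp [γ]
      _ ≤ ‖f' (γ t) - f' u‖ * ‖v - u‖ :=
        (Real.le_norm_self _).trans ((f' (γ t) - f' u).le_opNorm _)
      _ ≤ L * (t * ‖v - u‖) ^ α * ‖v - u‖ := by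
        rw [← hγt]; gcongr; exact hf' _ (hγ t (Ioo_subset_Icc_self ht)) u hu
      _ = L * ‖v - u‖ ^ (1 + α) * t ^ α := by
        rw [Real.mul_rpow ht.1.le (norm_nonneg _), Real.rpow_add' (norm_nonneg _) (by linarith),
          Real.rpow_one]
        ring
  have h := le_add_add_div_of_deriv_sub_le_mul_rpow hα hφ hφ'
  simp only [Function.comp, γ, zero_smul, one_smul, add_zero, add_sub_cancel] at h
  linarith [mul_div_right_comm L (‖v - u‖ ^ (1 + α)) (1 + α)]

section InnerProductSpace

variable {E : Type*} [NormedAddCommGroup E] [InnerProductSpace ℝ E] [CompleteSpace E]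
  {Ω : Set E} {f : E → ℝ} {g : E → E} {α L : ℝ} {u v : E}

lemma le_add_inner_add_mul_rpow_of_holder (hΩ : Convex ℝ Ω) (hα : 0 ≤ α)
    (hf : ∀ x ∈ Ω, HasGradientAt f (g x) x)
    (hg : ∀ x ∈ Ω, ∀ y ∈ Ω, ‖g x - g y‖ ≤ L * ‖x - y‖ ^ α) (hu : u ∈ Ω) (hv : v ∈ Ω) :
    f v ≤ f u + ⟪g u, v - u⟫ + L / (1 + α) * ‖v - u‖ ^ (1 + α) :=
  le_add_apply_add_mul_rpow_of_holder hΩ hα (fun x hx ↦ (hf x hx).hasFDerivAt)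
    (fun x hx y hy ↦ by rw [← map_sub, LinearIsometryEquiv.norm_map]; exact hg x hx y hy) hu hv

lemma le_add_inner_add_sq_of_holder {δ ρ : ℝ} (hΩ : Convex ℝ Ω) (hα₀ : 0 ≤ α) (hα₁ : α ≤ 1)
    (hL : 0 ≤ L) (hδ : 0 < δ) (hρ : inexactLipschitzConstant α L δ ≤ ρ)
    (hf : ∀ x ∈ Ω, HasGradientAt f (g x) x)
    (hg : ∀ x ∈ Ω, ∀ y ∈ Ω, ‖g x - g y‖ ≤ L * ‖x - y‖ ^ α) (hu : u ∈ Ω) (hv : v ∈ Ω) :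
    f v ≤ f u + ⟪g u, v - u⟫ + (ρ / 2 * ‖v - u‖ ^ 2 + δ / 2) :=
  (le_add_inner_add_mul_rpow_of_holder hΩ hα₀ hf hg hu hv).trans <| add_le_add le_rfl
    (div_mul_rpow_le_of_inexactLipschitzConstant_le (by linarith) hα₁ hL hδ hρ
      (norm_nonneg _))

end InnerProductSpace

theorem stmt_7 {n m : ℕ} (hm : 0 < m) (Ω : Set (EuclideanSpace ℝ (Fin n)))
    (hΩ : Convex ℝ Ω)
    (fc : Fin m → EuclideanSpace ℝ (Fin n) → ℝ)
    (g : Fin m → EuclideanSpace ℝ (Fin n) → EuclideanSpace ℝ (Fin n))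
    (α L : Fin m → ℝ) (hα : ∀ i, α i ∈ Set.Ioc (0:ℝ) 1) (hL : ∀ i, 0 < L i)
    (hdiff : ∀ i, ∀ x, HasGradientAt (fc i) (g i x) x)
    (hHolder : ∀ i, ∀ u ∈ Ω, ∀ v ∈ Ω, ‖g i u - g i v‖ ≤ L i * ‖u - v‖ ^ (α i))
    (δ ρ : ℝ) (hδ : 0 < δ)
    (hρ : ∀ i, ρ ≥ ((1 - α i) / ((1 + α i) * δ)) ^ ((1 - α i) / (1 + α i))
            * (L i) ^ (2 / (1 + α i)))
    (u v : EuclideanSpace ℝ (Fin n)) (hu : u ∈ Ω) (hv : v ∈ Ω) :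
    (1 / m : ℝ) * ∑ i, fc i v ≤ (1 / m : ℝ) * ∑ i, fc i u
      + ⟪(1 / m : ℝ) • ∑ i, g i u, v - u⟫ + ρ / 2 * ‖v - u‖ ^ 2 + δ / 2 := by
  have hm' : (m : ℝ) ≠ 0 := by positivity
  calc (1 / m : ℝ) * ∑ i, fc i v
      ≤ (1 / m : ℝ) * ∑ i, (fc i u + ⟪g i u, v - u⟫ + (ρ / 2 * ‖v - u‖ ^ 2 + δ / 2)) := by
        gcongr with i
        exact le_add_inner_add_sq_of_holder hΩ (hα i).1.le (hα i).2 (hL i).le hδ (hρ i)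
          (fun x _ ↦ hdiff i x) (hHolder i) hu hv
    _ = (1 / m : ℝ) * ∑ i, fc i u
        + ⟪(1 / m : ℝ) • ∑ i, g i u, v - u⟫ + ρ / 2 * ‖v - u‖ ^ 2 + δ / 2 := by
      simp only [Finset.sum_add_distrib, Finset.sum_const, Finset.card_univ, Fintype.card_fin,
        nsmul_eq_mul, real_inner_smul_left, sum_inner]
      field_simp
      ring
end

section
/- Let Ω ⊆ ℝⁿ be closed, convex, and nonempty; let f be differentiable and μ-strongly convex on Ω with minimizer u* ∈ Ω; let τ > 0 and δ ≥ 0; and suppose v⁺ = Π_Ω(v − τ∇f(v)) satisfies f(v⁺) ≤ f(v) + ⟨∇f(v), v⁺ − v⟩ + (1/(2τ))‖v⁺ − v‖² + δ. Then ‖v⁺ − u*‖² ≤ (1 − μτ)‖v − u*‖² + 2τ(f(u*) − f(v⁺) + δ). -/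
/-!
The projection optimality condition at `u⋆`, rewritten with the three-point identity, bounds
`‖v⁺ - u⋆‖²` by `2τ ⟪∇f(v), u⋆ - v⁺⟫ + ‖v - u⋆‖² - ‖v - v⁺‖²`. Strong convexity at `(u⋆, v)` and
the quadratic upper model at `v⁺` bound that inner product, and the `‖v - v⁺‖²` terms cancel
because the model's curvature `1/(2τ)` matches the step size.
-/

open RealInnerProductSpace

section

variable {F : Type*} [NormedAddCommGroup F] [InnerProductSpace ℝ F]

theorem Convex.real_inner_sub_nonpos_of_forall_norm_sub_le {K : Set F} (hK : Convex ℝ K)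
    {p x : F} (hx : x ∈ K) (hmin : ∀ w ∈ K, ‖x - p‖ ≤ ‖w - p‖) :
    ∀ w ∈ K, ⟪p - x, w - x⟫ ≤ 0 := by
  have : Nonempty K := ⟨⟨x, hx⟩⟩
  rw [← norm_eq_iInf_iff_real_inner_le_zero hK hx]
  refine le_antisymm (le_ciInf fun w => ?_) ?_
  · rw [norm_sub_rev, norm_sub_rev p]
    exact hmin w w.2
  · exact ciInf_le ⟨0, Set.forall_mem_range.2 fun w : K => norm_nonneg (p - w)⟩ ⟨x, hx⟩

theorem two_mul_real_inner_sub_sub (a b c : F) :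
    2 * ⟪a - b, c - b⟫ = ‖a - b‖ ^ 2 + ‖c - b‖ ^ 2 - ‖a - c‖ ^ 2 := by
  have h := norm_sub_sq_real (a - b) (c - b)
  rw [sub_sub_sub_cancel_right] at h
  linarith

theorem real_inner_sub_le_of_lower_model_of_upper_model {f : F → ℝ} {g u v w : F}
    {μ c δ : ℝ} (hlower : f u ≥ f v + ⟪g, u - v⟫ + μ / 2 * ‖u - v‖ ^ 2)
    (hupper : f w ≤ f v + ⟪g, w - v⟫ + c * ‖w - v‖ ^ 2 + δ) :
    ⟪g, u - w⟫ ≤ f u - f w + δ - μ / 2 * ‖u - v‖ ^ 2 + c * ‖w - v‖ ^ 2 := by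
  have h : ⟪g, u - w⟫ = ⟪g, u - v⟫ - ⟪g, w - v⟫ := by
    rw [← inner_sub_right, sub_sub_sub_cancel_right]
  linarith

end

theorem stmt_10_general {n : ℕ} (Ω : Set (EuclideanSpace ℝ (Fin n)))
    (hconv : Convex ℝ Ω)
    (f : EuclideanSpace ℝ (Fin n) → ℝ)
    (g : EuclideanSpace ℝ (Fin n) → EuclideanSpace ℝ (Fin n))
    (μ : ℝ)
    (hsc : ∀ u ∈ Ω, ∀ w ∈ Ω, f u ≥ f w + ⟪g w, u - w⟫ + μ / 2 * ‖u - w‖ ^ 2)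
    (ustar : EuclideanSpace ℝ (Fin n)) (hustar : ustar ∈ Ω)
    (τ δ : ℝ) (hτ : 0 < τ)
    (v vplus : EuclideanSpace ℝ (Fin n)) (hv : v ∈ Ω)
    (hproj₁ : vplus ∈ Ω)
    (hproj₂ : ∀ u ∈ Ω, ‖vplus - (v - τ • g v)‖ ≤ ‖u - (v - τ • g v)‖)
    (hstep : f vplus ≤ f v + ⟪g v, vplus - v⟫ + 1 / (2 * τ) * ‖vplus - v‖ ^ 2 + δ) :
    ‖vplus - ustar‖ ^ 2 ≤ (1 - μ * τ) * ‖v - ustar‖ ^ 2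
      + 2 * τ * (f ustar - f vplus + δ) := by
  have hopt : ⟪v - vplus, ustar - vplus⟫ ≤ τ * ⟪g v, ustar - vplus⟫ := by
    have h := hconv.real_inner_sub_nonpos_of_forall_norm_sub_le hproj₁ hproj₂ ustar hustar
    rw [sub_right_comm, inner_sub_left, real_inner_smul_left] at h
    linarith
  have hdescent : 2 * τ * ⟪g v, ustar - vplus⟫ ≤
      2 * τ * (f ustar - f vplus + δ) - μ * τ * ‖v - ustar‖ ^ 2 + ‖v - vplus‖ ^ 2 := by
    have h := real_inner_sub_le_of_lower_model_of_upper_model (hsc ustar hustar v hv) hstep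
    rw [norm_sub_rev ustar v, norm_sub_rev vplus v] at h
    calc 2 * τ * ⟪g v, ustar - vplus⟫
        ≤ 2 * τ * (f ustar - f vplus + δ - μ / 2 * ‖v - ustar‖ ^ 2
            + 1 / (2 * τ) * ‖v - vplus‖ ^ 2) := by gcongr
      _ = _ := by field_simp
  have hthree := two_mul_real_inner_sub_sub v vplus ustar
  rw [norm_sub_rev ustar vplus] at hthree
  linarith

theorem stmt_10 {n : ℕ} (Ω : Set (EuclideanSpace ℝ (Fin n)))
    (hclosed : IsClosed Ω) (hconv : Convex ℝ Ω) (hne : Ω.Nonempty)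
    (f : EuclideanSpace ℝ (Fin n) → ℝ)
    (g : EuclideanSpace ℝ (Fin n) → EuclideanSpace ℝ (Fin n))
    (μ : ℝ) (hμ : 0 < μ)
    (hdiff : ∀ x ∈ Ω, HasGradientAt f (g x) x)
    (hsc : ∀ u ∈ Ω, ∀ w ∈ Ω, f u ≥ f w + ⟪g w, u - w⟫ + μ / 2 * ‖u - w‖ ^ 2)
    (ustar : EuclideanSpace ℝ (Fin n)) (hustar : ustar ∈ Ω)
    (hmin : ∀ u ∈ Ω, f ustar ≤ f u)
    (τ δ : ℝ) (hτ : 0 < τ) (hδ : 0 ≤ δ)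
    (v vplus : EuclideanSpace ℝ (Fin n)) (hv : v ∈ Ω)
    (hproj₁ : vplus ∈ Ω)
    (hproj₂ : ∀ u ∈ Ω, ‖vplus - (v - τ • g v)‖ ≤ ‖u - (v - τ • g v)‖)
    (hstep : f vplus ≤ f v + ⟪g v, vplus - v⟫ + 1 / (2 * τ) * ‖vplus - v‖ ^ 2 + δ) :
    ‖vplus - ustar‖ ^ 2 ≤ (1 - μ * τ) * ‖v - ustar‖ ^ 2
      + 2 * τ * (f ustar - f vplus + δ) :=
  stmt_10_general Ω hconv f g μ hsc ustar hustar τ δ hτ v vplus hv hproj₁ hproj₂ hstep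
end
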